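/- arXiv:2210.09115 — 4 statements merged into one kernel-verified Lean document; each statement's English description precedes it below -/
import Mathlib

section
/- For $p_1, \ldots, p_d \geq 2$ and $\ell \geq 1$, the ratio $|\mathcal{K}_{N_1 \times \cdots \times N_d; \ell}| / (N_1 \cdots N_d)$ tends to $(P-1)^2 / P^{\ell+1}$ as $\min_j N_j \to \infty$, where $P = p_1 \cdots p_d$. -/
/-!
If `p_j ∤ i_j` for some `j`, the points `i p^m` of the box are exactly those with `m < L`, where
`L` is the first exponent taking `i p^m` out of the box; so `i` counts for `ℓ` iff `i p^(ℓ-1)` lies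
in the box and `i p^ℓ` does not. Such `i` with `i p^s` in the box are the points of the box
`⌊N / p^s⌋` with some coordinate not divisible by `p`, and the other points of that box form a copy
of the box `⌊N / p^(s+1)⌋`. Hence `|𝒦_ℓ| = A_(ℓ-1) - 2 A_ℓ + A_(ℓ+1)` with
`A_s = ∏_j ⌊N_j / p_j^s⌋`, and `A_s / ∏_j N_j → P^(-s)` gives the limit
`P^(1-ℓ) (1 - 1/P)^2 = (P - 1)^2 / P^(ℓ+1)`.
-/

open Finset Filter Topology

lemma tendsto_natDiv_div_atTop (q : ℕ) :
    Tendsto (fun n : ℕ => ((n / q : ℕ) : ℝ) / n) atTop (𝓝 (q : ℝ)⁻¹) := by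
  refine ((tendsto_nat_floor_mul_div_atTop (inv_nonneg.2 q.cast_nonneg)).comp
    tendsto_natCast_atTop_atTop).congr fun n => ?_
  simp [inv_mul_eq_div, Nat.floor_div_eq_div]

lemma tendsto_prod_natDiv_div_prod_atTop {ι : Type*} [Fintype ι] (q : ι → ℕ) :
    Tendsto (fun N : ι → ℕ => ((∏ j, N j / q j : ℕ) : ℝ) / ∏ j, (N j : ℝ)) atTop
      (𝓝 (∏ j, (q j : ℝ)⁻¹)) := by
  simp only [Nat.cast_prod, ← prod_div_distrib]
  refine tendsto_finsetProd _ fun j _ => (tendsto_natDiv_div_atTop (q j)).comp ?_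
  exact tendsto_atTop_atTop_of_monotone (fun _ _ h => h j) fun b => ⟨fun _ => b, le_rfl⟩

theorem Nat.exists_iff_lt_of_antitone {Q : ℕ → Prop} (hQ : Antitone Q) (h : ∃ m, ¬ Q m) :
    ∃ L, ∀ m, Q m ↔ m < L := by
  classical
  refine ⟨Nat.find h, fun m => ?_⟩
  simp only [Nat.lt_find_iff, not_not]
  exact ⟨fun hm k hk => hQ hk hm, fun hk => hk m le_rfl⟩

section Box

variable {ι : Type*} [Fintype ι] [DecidableEq ι]

def latticeBox (N : ι → ℕ) : Finset (ι → ℕ) := Fintype.piFinset fun j => Icc 1 (N j)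

@[simp] lemma mem_latticeBox {N i : ι → ℕ} : i ∈ latticeBox N ↔ ∀ j, 1 ≤ i j ∧ i j ≤ N j := by
  simp [latticeBox]

lemma card_latticeBox (N : ι → ℕ) : #(latticeBox N) = ∏ j, N j := by
  simp [latticeBox]

lemma card_filter_forall_dvd_latticeBox (p N : ι → ℕ) :
    #{i ∈ latticeBox N | ∀ j, p j ∣ i j} = ∏ j, N j / p j := by
  have : {i ∈ latticeBox N | ∀ j, p j ∣ i j} =
      Fintype.piFinset fun j => {x ∈ Ioc 0 (N j) | p j ∣ x} := by
    ext i
    simp [forall_and, Nat.one_le_iff_ne_zero, Nat.pos_iff_ne_zero]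
  simp [this, Nat.Ioc_filter_dvd_card_eq_div]

def primitives (p N : ι → ℕ) : Finset (ι → ℕ) := {i ∈ latticeBox N | ∃ j, ¬ p j ∣ i j}

lemma card_primitives_add (p N : ι → ℕ) :
    #(primitives p N) + ∏ j, N j / p j = ∏ j, N j := by
  rw [← card_filter_forall_dvd_latticeBox, ← card_latticeBox, primitives]
  simpa only [not_exists, not_not] using
    card_filter_add_card_filter_not (s := latticeBox N) (fun i => ∃ j, ¬ p j ∣ i j)

lemma card_primitives_div_pow_add (p N : ι → ℕ) (s : ℕ) :
    #(primitives p fun j => N j / p j ^ s) + ∏ j, N j / p j ^ (s + 1) = ∏ j, N j / p j ^ s := by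
  simpa only [Nat.div_div_eq_div_mul, ← pow_succ] using
    card_primitives_add p fun j => N j / p j ^ s

lemma mem_primitives_div_pow {p N i : ι → ℕ} (hp : ∀ j, 0 < p j) (s : ℕ) :
    i ∈ primitives p (fun j => N j / p j ^ s) ↔
      i ∈ primitives p N ∧ ∀ j, i j * p j ^ s ≤ N j := by
  simp only [primitives, mem_filter, mem_latticeBox, Nat.le_div_iff_mul_le (pow_pos (hp _) s)]
  constructor
  · rintro ⟨hi, hprim⟩
    refine ⟨⟨fun j => ⟨(hi j).1, ?_⟩, hprim⟩, fun j => (hi j).2⟩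
    exact (Nat.le_mul_of_pos_right _ (pow_pos (hp j) s)).trans (hi j).2
  · rintro ⟨⟨hi, hprim⟩, hs⟩
    exact ⟨fun j => ⟨(hi j).1, hs j⟩, hprim⟩

open Classical in
noncomputable def orbitInBox (p N i : ι → ℕ) : Finset (ι → ℕ) :=
  {x ∈ latticeBox N | ∃ m : ℕ, ∀ j, x j = i j * p j ^ m}

lemma card_orbitInBox_eq_succ_iff [Nonempty ι] {p N i : ι → ℕ} (hp : ∀ j, 2 ≤ p j)
    (hi : i ∈ latticeBox N) (t : ℕ) :
    #(orbitInBox p N i) = t + 1 ↔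
      (∀ j, i j * p j ^ t ≤ N j) ∧ ¬ ∀ j, i j * p j ^ (t + 1) ≤ N j := by
  rw [mem_latticeBox] at hi
  set Q : ℕ → Prop := fun m => ∀ j, i j * p j ^ m ≤ N j
  have hQ : Antitone Q := fun a b hab hb j =>
    (Nat.mul_le_mul_left _ (Nat.pow_le_pow_right (by linarith [hp j]) hab)).trans (hb j)
  obtain ⟨j₀⟩ := ‹Nonempty ι›
  have hQ_false : ¬ Q (N j₀) := fun h => by
    have := Nat.lt_two_pow_self (n := N j₀)
    have := Nat.pow_le_pow_left (hp j₀) (N j₀)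
    have := Nat.le_mul_of_pos_left (p j₀ ^ N j₀) (hi j₀).1
    linarith [h j₀]
  obtain ⟨L, hL⟩ := Nat.exists_iff_lt_of_antitone hQ ⟨_, hQ_false⟩
  have hinj : Function.Injective fun m j => i j * p j ^ m := fun a b h =>
    Nat.pow_right_injective (hp j₀) (Nat.eq_of_mul_eq_mul_left (hi j₀).1 (congrFun h j₀))
  have horbit : orbitInBox p N i = (range L).image fun m j => i j * p j ^ m := by
    ext x
    simp only [orbitInBox, mem_filter, mem_latticeBox, mem_image, mem_range, ← hL]
    constructor
    · rintro ⟨hx, m, hm⟩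
      obtain rfl : x = _ := funext hm
      exact ⟨m, fun j => (hx j).2, rfl⟩
    · rintro ⟨m, hm, rfl⟩
      refine ⟨fun j => ⟨?_, hm j⟩, m, fun j => rfl⟩
      exact Nat.mul_pos (hi j).1 (pow_pos (by linarith [hp j]) m)
  rw [horbit, card_image_of_injective _ hinj, card_range]
  change L = t + 1 ↔ Q t ∧ ¬ Q (t + 1)
  rw [hL, hL]
  omega

open Classical in
noncomputable def levelSet (p N : ι → ℕ) (ℓ : ℕ) : Finset (ι → ℕ) :=
  {i ∈ latticeBox N | (∃ j, ¬ p j ∣ i j) ∧ #(orbitInBox p N i) = ℓ}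

lemma levelSet_succ_eq_sdiff {p : ι → ℕ} (hp : ∀ j, 2 ≤ p j) (N : ι → ℕ) (t : ℕ) :
    levelSet p N (t + 1) =
      (primitives p fun j => N j / p j ^ t) \ primitives p fun j => N j / p j ^ (t + 1) := by
  have hp₀ j : 0 < p j := by linarith [hp j]
  ext i
  rw [Finset.mem_sdiff, mem_primitives_div_pow hp₀, mem_primitives_div_pow hp₀]
  simp only [levelSet, primitives, mem_filter]
  constructor
  · rintro ⟨hi, ⟨j₀, hj₀⟩, hcard⟩
    have : Nonempty ι := ⟨j₀⟩
    rw [card_orbitInBox_eq_succ_iff hp hi] at hcard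
    exact ⟨⟨⟨hi, j₀, hj₀⟩, hcard.1⟩, fun h => hcard.2 h.2⟩
  · rintro ⟨⟨⟨hi, j₀, hj₀⟩, ht⟩, hnot⟩
    have : Nonempty ι := ⟨j₀⟩
    rw [card_orbitInBox_eq_succ_iff hp hi]
    exact ⟨hi, ⟨j₀, hj₀⟩, ht, fun h => hnot ⟨⟨hi, j₀, hj₀⟩, h⟩⟩

lemma card_levelSet_succ_add {p : ι → ℕ} (hp : ∀ j, 2 ≤ p j) (N : ι → ℕ) (t : ℕ) :
    #(levelSet p N (t + 1)) + 2 * ∏ j, N j / p j ^ (t + 1) =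
      ∏ j, N j / p j ^ t + ∏ j, N j / p j ^ (t + 2) := by
  have hp₀ j : 0 < p j := by linarith [hp j]
  have hsub : (primitives p fun j => N j / p j ^ (t + 1)) ⊆ primitives p fun j => N j / p j ^ t :=
    fun i hi => by
      rw [mem_primitives_div_pow hp₀] at hi ⊢
      refine ⟨hi.1, fun j => ?_⟩
      exact (Nat.mul_le_mul_left _ (Nat.pow_le_pow_right (hp₀ j) t.le_succ)).trans (hi.2 j)
  have hle := card_le_card hsub
  have h₀ := card_primitives_div_pow_add p N t
  have h₁ : _ + ∏ j, N j / p j ^ (t + 2) = _ := card_primitives_div_pow_add p N (t + 1)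
  rw [levelSet_succ_eq_sdiff hp, card_sdiff_of_subset hsub]
  omega

lemma tendsto_card_levelSet_succ_div {p : ι → ℕ} (hp : ∀ j, 2 ≤ p j) (t : ℕ) :
    Tendsto (fun N : ι → ℕ => (#(levelSet p N (t + 1)) : ℝ) / ∏ j, (N j : ℝ)) atTop
      (𝓝 (((∏ j, (p j : ℝ)) - 1) ^ 2 / (∏ j, (p j : ℝ)) ^ (t + 2))) := by
  have hA s := tendsto_prod_natDiv_div_prod_atTop fun j => p j ^ s
  convert ((hA t).sub ((hA (t + 1)).const_mul 2)).add (hA (t + 2)) using 1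
  · funext N
    have h := congrArg (Nat.cast (R := ℝ)) (card_levelSet_succ_add hp N t)
    push_cast at h ⊢
    linear_combination h / ∏ j, (N j : ℝ)
  · congr 1
    have hP : (∏ j, (p j : ℝ)) ≠ 0 := prod_ne_zero_iff.2 fun j _ => by have := hp j; positivity
    simp only [Nat.cast_pow, prod_inv_distrib, prod_pow]
    field_simp
    ring

end Box

open Classical in
theorem stmt5_general (d : ℕ) (p : Fin d → ℕ) (hp : ∀ j, 2 ≤ p j)
    (ℓ : ℕ) (hℓ : 1 ≤ ℓ) :
    ∀ ε > (0 : ℝ), ∃ M : ℕ, ∀ N : Fin d → ℕ, (∀ j, M ≤ N j) →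
      |((((Fintype.piFinset (fun j => Finset.Icc 1 (N j))).filter (fun i =>
          (∃ j, ¬ p j ∣ i j) ∧
          ((Fintype.piFinset (fun j => Finset.Icc 1 (N j))).filter
            (fun x => ∃ m : ℕ, ∀ j, x j = i j * p j ^ m)).card = ℓ)).card : ℝ)
          / ∏ j, (N j : ℝ))
        - ((∏ j, (p j : ℝ)) - 1) ^ 2 / (∏ j, (p j : ℝ)) ^ (ℓ + 1)| < ε := by
  obtain ⟨t, rfl⟩ : ∃ t, ℓ = t + 1 := ⟨ℓ - 1, by omega⟩
  intro ε hε
  obtain ⟨N₀, hN₀⟩ := Metric.tendsto_atTop.1 (tendsto_card_levelSet_succ_div hp t) ε hε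
  refine ⟨univ.sup N₀, fun N hN => ?_⟩
  rw [← Real.dist_eq]
  convert hN₀ N fun j => (le_sup (mem_univ j)).trans (hN j) using 6
  -- the two sets differ only in the `Decidable` instance chosen for `∃ j, ¬ p j ∣ i j`
  unfold levelSet orbitInBox latticeBox
  congr! 1

open Classical in
/-- `d`-dimensional density: `|K_{N₁×⋯×N_d;ℓ}|/(N₁⋯N_d) → (P-1)²/P^(ℓ+1)` with `P = p₁⋯p_d`,
as `min_j N_j → ∞`. -/
theorem stmt5 (d : ℕ) (hd : 1 ≤ d) (p : Fin d → ℕ) (hp : ∀ j, 2 ≤ p j)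
    (ℓ : ℕ) (hℓ : 1 ≤ ℓ) :
    ∀ ε > (0 : ℝ), ∃ M : ℕ, ∀ N : Fin d → ℕ, (∀ j, M ≤ N j) →
      |((((Fintype.piFinset (fun j => Finset.Icc 1 (N j))).filter (fun i =>
          (∃ j, ¬ p j ∣ i j) ∧
          ((Fintype.piFinset (fun j => Finset.Icc 1 (N j))).filter
            (fun x => ∃ m : ℕ, ∀ j, x j = i j * p j ^ m)).card = ℓ)).card : ℝ)
          / ∏ j, (N j : ℝ))
        - ((∏ j, (p j : ℝ)) - 1) ^ 2 / (∏ j, (p j : ℝ)) ^ (ℓ + 1)| < ε :=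
  stmt5_general d p hp ℓ hℓ
end

section
/- Let $p_1, p_2 \geq 2$ and suppose $\log|\Omega_{i}| = \log\|A^{i-1}\|_1$ where $A$ is a primitive (irreducible aperiodic) nonnegative integer matrix with Perron eigenvalue $\lambda_A$, and $\|M\|_1$ denotes the sum of all entries. Let $h = (1 - \tfrac{1}{p_1p_2})(p_1p_2 - 1)\sum_{i=1}^{\infty}\frac{\log|\Omega_i|}{(p_1p_2)^i}$ and $x_n = p_1^{k_1 n}$, $y_n = p_2^{k_2 n}$ with $k_1 \geq k_2 \geq 1$. Then $\lim_{n\to\infty} \frac{\log|\mathcal{P}(\mathbb{Z}_{x_n, y_n}, X^{\mathbf{p}}_\Omega)| - x_n y_n h}{r_n \cdot x_n y_n / (p_1 p_2)^{r_n}} = -\left(1 - \frac{1}{p_1 p_2}\right)\log \lambda_A$, where $r_n = k_2 n$ and $\log|\mathcal{P}(\mathbb{Z}_{x_n,y_n}, X^{\mathbf{p}}_\Omega)| = (1-\tfrac{1}{p_1p_2})(p_1p_2-1)\sum_{i=1}^{r_n} \frac{x_n y_n}{(p_1p_2)^i}\log|\Omega_i|$. -/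
/-!
A positive eigenvector `v` of the nonnegative matrix `A` squeezes the entry sum of `A ^ n`
between `(∑ v / max v) λⁿ` and `(∑ v / min v) λⁿ`, so `c (i + 1) = i log λ + O(1)`.
With `q = p₁p₂` and `r = k₂n`, the normalised error is `-(1 - 1/q)(q - 1) qʳ (∑_{i > r} c i / qⁱ) / r`,
and `qʳ ∑_{i > r} c i / qⁱ = ∑_j c (j + r + 1) / q^(j+1)` differs from
`r log λ ∑_j q^-(j+1) = r log λ / (q - 1)` by at most `∑_j (|log λ| j + O(1)) / q^(j+1)`.
-/

open Filter Topology Finset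

namespace Matrix

variable {ι : Type*} [Fintype ι] {A : Matrix ι ι ℝ} {lam : ℝ} {v : ι → ℝ}

lemma pow_mulVec_of_mulVec_eq_smul [DecidableEq ι] (hv : A *ᵥ v = lam • v) (n : ℕ) :
    (A ^ n) *ᵥ v = lam ^ n • v := by
  induction n with
  | zero => simp
  | succ n ih =>
    rw [pow_succ', ← mulVec_mulVec, ih, mulVec_smul, hv, smul_smul, pow_succ]

lemma sum_mulVec_le_mul_sum (hA : ∀ i j, 0 ≤ A i j) {b : ℝ} (hb : ∀ j, v j ≤ b) :
    ∑ i, (A *ᵥ v) i ≤ b * ∑ i, ∑ j, A i j := by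
  simp only [mulVec, dotProduct, Finset.mul_sum]
  refine Finset.sum_le_sum fun i _ => Finset.sum_le_sum fun j _ => ?_
  rw [mul_comm b]
  exact mul_le_mul_of_nonneg_left (hb j) (hA i j)

lemma mul_sum_le_sum_mulVec (hA : ∀ i j, 0 ≤ A i j) {a : ℝ} (ha : ∀ j, a ≤ v j) :
    a * ∑ i, ∑ j, A i j ≤ ∑ i, (A *ᵥ v) i := by
  simp only [mulVec, dotProduct, Finset.mul_sum]
  refine Finset.sum_le_sum fun i _ => Finset.sum_le_sum fun j _ => ?_
  rw [mul_comm a]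
  exact mul_le_mul_of_nonneg_left (ha j) (hA i j)

lemma eigenvalue_nonneg_of_pos_eigenvector [Nonempty ι] (hA : ∀ i j, 0 ≤ A i j)
    (hv : ∀ i, 0 < v i) (hAv : A *ᵥ v = lam • v) : 0 ≤ lam := by
  obtain ⟨i⟩ := ‹Nonempty ι›
  have : 0 ≤ lam * v i := by
    rw [← smul_eq_mul, ← Pi.smul_apply, ← hAv]
    exact Finset.sum_nonneg fun j _ => mul_nonneg (hA i j) (hv j).le
  exact nonneg_of_mul_nonneg_left this (hv i)

lemma exists_mul_pow_le_sum_pow_apply_le [DecidableEq ι] [Nonempty ι] (hA : ∀ i j, 0 ≤ A i j)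
    (hv : ∀ i, 0 < v i) (hAv : A *ᵥ v = lam • v) :
    ∃ a b : ℝ, 0 < a ∧ 0 < b ∧ ∀ n : ℕ,
      a * lam ^ n ≤ ∑ i, ∑ j, (A ^ n) i j ∧ ∑ i, ∑ j, (A ^ n) i j ≤ b * lam ^ n := by
  obtain ⟨jmin, -, hmin⟩ := Finset.exists_min_image univ v univ_nonempty
  obtain ⟨jmax, -, hmax⟩ := Finset.exists_max_image univ v univ_nonempty
  have hsum : 0 < ∑ i, v i := Finset.sum_pos (fun i _ => hv i) univ_nonempty
  refine ⟨(∑ i, v i) / v jmax, (∑ i, v i) / v jmin, div_pos hsum (hv jmax),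
    div_pos hsum (hv jmin), fun n => ?_⟩
  have hAn := pow_apply_nonneg hA n
  have hsumAn : ∑ i, ((A ^ n) *ᵥ v) i = lam ^ n * ∑ i, v i := by
    simp [pow_mulVec_of_mulVec_eq_smul hAv, Finset.mul_sum]
  constructor
  · rw [div_mul_eq_mul_div, div_le_iff₀ (hv jmax), mul_comm _ (v jmax), mul_comm (∑ i, v i),
      ← hsumAn]
    exact sum_mulVec_le_mul_sum hAn fun j => hmax j (mem_univ j)
  · rw [div_mul_eq_mul_div, le_div_iff₀ (hv jmin), mul_comm _ (v jmin), mul_comm (∑ i, v i),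
      ← hsumAn]
    exact mul_sum_le_sum_mulVec hAn fun j => hmin j (mem_univ j)

lemma exists_abs_log_sum_pow_apply_sub_le [DecidableEq ι] [Nonempty ι] (hA : ∀ i j, 0 ≤ A i j)
    (hv : ∀ i, 0 < v i) (hAv : A *ᵥ v = lam • v) :
    ∃ C : ℝ, ∀ n : ℕ, |Real.log (∑ i, ∑ j, (A ^ n) i j) - n * Real.log lam| ≤ C := by
  obtain ⟨a, b, ha, hb, hbounds⟩ := exists_mul_pow_le_sum_pow_apply_le hA hv hAv
  rcases (eigenvalue_nonneg_of_pos_eigenvector hA hv hAv).eq_or_lt with rfl | hlam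
  · -- `A ^ n = 0` for `n ≥ 1`, and both logarithms are then the junk value `Real.log 0 = 0`
    refine ⟨|Real.log (∑ i, ∑ j, (A ^ 0) i j)|, fun n => ?_⟩
    rcases n with _ | n
    · simp
    · have hzero : ∑ i, ∑ j, (A ^ (n + 1)) i j = 0 := by
        have := hbounds (n + 1)
        simp only [zero_pow n.succ_ne_zero, mul_zero] at this
        exact le_antisymm this.2 this.1
      simp [hzero]
  · refine ⟨max |Real.log a| |Real.log b|, fun n => ?_⟩
    obtain ⟨hlow, hup⟩ := hbounds n
    have hlog : ∀ c : ℝ, 0 < c → Real.log (c * lam ^ n) = Real.log c + n * Real.log lam :=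
      fun c hc => by rw [Real.log_mul hc.ne' (pow_pos hlam n).ne', Real.log_pow]
    have hpos : 0 < a * lam ^ n := by positivity
    have h1 := Real.log_le_log hpos hlow
    have h2 := Real.log_le_log (hpos.trans_le hlow) hup
    rw [hlog a ha] at h1
    rw [hlog b hb] at h2
    rw [abs_le]
    constructor <;> linarith [neg_abs_le (Real.log a), le_abs_self (Real.log b),
      le_max_left |Real.log a| |Real.log b|, le_max_right |Real.log a| |Real.log b|]

end Matrix

lemma tendsto_div_natCast_of_abs_sub_mul_le {f : ℕ → ℝ} {a K : ℝ} (h : ∀ r, |f r - r * a| ≤ K) :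
    Tendsto (fun r : ℕ => f r / r) atTop (𝓝 a) := by
  have herr : Tendsto (fun r : ℕ => (f r - r * a) / r) atTop (𝓝 0) := by
    refine squeeze_zero_norm (fun r => ?_) (tendsto_const_div_atTop_nhds_zero_nat K)
    rw [norm_div, Real.norm_eq_abs, Real.norm_eq_abs, Nat.abs_cast]
    exact div_le_div_of_nonneg_right (h r) (Nat.cast_nonneg r)
  rw [← add_zero a]
  refine (herr.const_add a).congr' ?_
  filter_upwards [eventually_ne_atTop 0] with r hr
  field_simp
  ring

section Series

variable {q : ℝ}

lemma summable_affine_div_pow (hq : 1 < q) (a b : ℝ) :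
    Summable fun j : ℕ => (a * j + b) / q ^ (j + 1) := by
  have hr : ‖q⁻¹‖ < 1 := by
    rw [norm_inv, Real.norm_eq_abs, abs_of_pos (by linarith)]
    exact inv_lt_one_of_one_lt₀ hq
  refine ((((summable_pow_mul_geometric_of_norm_lt_one 1 hr).mul_left a).add
    ((summable_geometric_of_norm_lt_one hr).mul_left b)).mul_right q⁻¹).congr fun j => ?_
  simp only [div_eq_mul_inv, inv_pow, pow_succ]
  ring

lemma hasSum_one_div_pow_succ (hq : 1 < q) :
    HasSum (fun j : ℕ => 1 / q ^ (j + 1)) (1 / (q - 1)) := by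
  have h := (hasSum_geometric_of_lt_one (inv_nonneg.2 (by linarith))
    (inv_lt_one_of_one_lt₀ hq)).mul_right q⁻¹
  have hq0 : q ≠ 0 := by linarith
  have hq1 : q - 1 ≠ 0 := by linarith
  rw [show (1 - q⁻¹)⁻¹ * q⁻¹ = 1 / (q - 1) by field_simp] at h
  exact h.congr_fun fun j => by rw [pow_succ, inv_pow, one_div, mul_inv]

variable {c : ℕ → ℝ} {L M : ℝ}

lemma summable_div_pow_of_abs_sub_mul_le (hq : 1 < q) (hc : ∀ i : ℕ, |c (i + 1) - i * L| ≤ M) :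
    Summable fun i : ℕ => c (i + 1) / q ^ (i + 1) := by
  refine (summable_affine_div_pow hq |L| M).of_norm_bounded fun i => ?_
  have hq0 : 0 < q ^ (i + 1) := pow_pos (by linarith) _
  rw [norm_div, Real.norm_eq_abs, Real.norm_eq_abs, abs_of_pos hq0]
  refine div_le_div_of_nonneg_right ?_ hq0.le
  have h := abs_sub_abs_le_abs_sub (c (i + 1)) (i * L)
  rw [abs_mul, Nat.abs_cast] at h
  linarith [hc i]

lemma hasSum_div_pow_nat_add (hq : q ≠ 0) (hsum : Summable fun i : ℕ => c (i + 1) / q ^ (i + 1))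
    (r : ℕ) :
    HasSum (fun j : ℕ => c (j + r + 1) / q ^ (j + 1))
      ((∑' i, c (i + 1) / q ^ (i + 1) - ∑ i ∈ Icc 1 r, c i / q ^ i) * q ^ r) := by
  have hIcc : ∑ i ∈ Icc 1 r, c i / q ^ i = ∑ i ∈ range r, c (i + 1) / q ^ (i + 1) := by
    rw [← Finset.Ico_add_one_right_eq_Icc, Finset.sum_Ico_eq_sum_range]
    simp [add_comm]
  rw [hIcc]
  refine (((hasSum_nat_add_iff' r).2 hsum.hasSum).mul_right (q ^ r)).congr_fun fun j => ?_
  rw [add_right_comm, pow_add _ (j + 1) r]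
  field_simp

lemma abs_tsum_sub_sum_Icc_mul_pow_sub_le (hq : 1 < q) (hc : ∀ i : ℕ, |c (i + 1) - i * L| ≤ M)
    (r : ℕ) :
    |(∑' i, c (i + 1) / q ^ (i + 1) - ∑ i ∈ Icc 1 r, c i / q ^ i) * q ^ r - r * (L / (q - 1))|
      ≤ ∑' j : ℕ, (|L| * j + M) / q ^ (j + 1) := by
  have htail := hasSum_div_pow_nat_add (by linarith) (summable_div_pow_of_abs_sub_mul_le hq hc) r
  have hmain := (hasSum_one_div_pow_succ hq).mul_left (r * L)
  rw [mul_one_div, mul_div_assoc] at hmain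
  refine (htail.sub hmain).norm_le_of_bounded (summable_affine_div_pow hq |L| M).hasSum fun j => ?_
  have hq0 : 0 < q ^ (j + 1) := pow_pos (by linarith) _
  rw [mul_one_div, ← sub_div, norm_div, Real.norm_eq_abs, Real.norm_eq_abs, abs_of_pos hq0]
  refine div_le_div_of_nonneg_right ?_ hq0.le
  have h := abs_sub_abs_le_abs_sub (c (j + r + 1) - r * L) (j * L)
  rw [abs_mul, Nat.abs_cast, sub_sub, ← add_mul] at h
  have hcj : |c (j + r + 1) - (r + j) * L| ≤ M := by simpa [add_comm] using hc (j + r)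
  linarith [mul_comm (j : ℝ) |L|]

lemma tendsto_sum_Icc_sub_tsum_mul_pow_div (hq : 1 < q) (hc : ∀ i : ℕ, |c (i + 1) - i * L| ≤ M) :
    Tendsto (fun r : ℕ =>
        (∑ i ∈ Icc 1 r, c i / q ^ i - ∑' i, c (i + 1) / q ^ (i + 1)) * q ^ r / r)
      atTop (𝓝 (-(L / (q - 1)))) := by
  refine (tendsto_div_natCast_of_abs_sub_mul_le
    (abs_tsum_sub_sum_Icc_mul_pow_sub_le hq hc)).neg.congr fun r => ?_
  rw [← neg_div, ← neg_mul, neg_sub]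

lemma mul_sum_Icc_sub_mul_tsum_div_eq {X : ℝ} (hX : X ≠ 0) (a : ℝ) (r : ℕ) :
    (a * ∑ i ∈ Icc 1 r, X / q ^ i * c i - X * (a * ∑' i, c (i + 1) / q ^ (i + 1)))
        / (r * X / q ^ r)
      = a * ((∑ i ∈ Icc 1 r, c i / q ^ i - ∑' i, c (i + 1) / q ^ (i + 1)) * q ^ r / r) := by
  have hsum : ∑ i ∈ Icc 1 r, X / q ^ i * c i = X * ∑ i ∈ Icc 1 r, c i / q ^ i := by
    rw [Finset.mul_sum]
    exact Finset.sum_congr rfl fun i _ => by ring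
  rw [hsum, div_div_eq_mul_div]
  generalize ∑ i ∈ Icc 1 r, c i / q ^ i = S
  generalize ∑' i : ℕ, c (i + 1) / q ^ (i + 1) = T
  rw [show (a * (X * S) - X * (a * T)) * q ^ r = a * ((S - T) * q ^ r) * X by ring,
    mul_div_mul_right _ _ hX]
  ring

end Series

theorem stmt12_general (m : ℕ) (hm : 1 ≤ m) (A : Matrix (Fin m) (Fin m) ℝ)
    (hA0 : ∀ i j, 0 ≤ A i j)
    (lam : ℝ) (rv : Fin m → ℝ) (hrv : ∀ i, 0 < rv i)
    (hright : A.mulVec rv = lam • rv)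
    (p1 p2 k1 k2 : ℕ) (hp1 : 2 ≤ p1) (hp2 : 2 ≤ p2) (hk2 : 1 ≤ k2)
    (c : ℕ → ℝ) (hc : ∀ i, 1 ≤ i → c i = Real.log (∑ k, ∑ j, (A ^ (i - 1)) k j))
    (h : ℝ)
    (hh : h = (1 - 1 / ((p1 : ℝ) * p2)) * ((p1 : ℝ) * p2 - 1) *
      ∑' i : ℕ, c (i + 1) / ((p1 : ℝ) * p2) ^ (i + 1)) :
    Filter.Tendsto (fun n : ℕ =>
      ((1 - 1 / ((p1 : ℝ) * p2)) * ((p1 : ℝ) * p2 - 1) *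
          (∑ i ∈ Finset.Icc 1 (k2 * n),
            ((p1 : ℝ) ^ (k1 * n) * (p2 : ℝ) ^ (k2 * n) / ((p1 : ℝ) * p2) ^ i) * c i)
        - (p1 : ℝ) ^ (k1 * n) * (p2 : ℝ) ^ (k2 * n) * h)
      / (((k2 * n : ℕ) : ℝ) * ((p1 : ℝ) ^ (k1 * n) * (p2 : ℝ) ^ (k2 * n))
          / ((p1 : ℝ) * p2) ^ (k2 * n)))
      Filter.atTop (nhds (-(1 - 1 / ((p1 : ℝ) * p2)) * Real.log lam)) := by
  subst hh
  have : Nonempty (Fin m) := ⟨⟨0, hm⟩⟩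
  have hp1' : (2 : ℝ) ≤ p1 := by exact_mod_cast hp1
  have hp2' : (2 : ℝ) ≤ p2 := by exact_mod_cast hp2
  set q : ℝ := (p1 : ℝ) * p2
  have hq : 1 < q := by nlinarith
  obtain ⟨C, hC⟩ := Matrix.exists_abs_log_sum_pow_apply_sub_le hA0 hrv hright
  have hcC : ∀ i : ℕ, |c (i + 1) - i * Real.log lam| ≤ C := fun i => by
    simpa [hc (i + 1) (Nat.le_add_left 1 i)] using hC i
  have hr : Tendsto (fun n => k2 * n) atTop atTop :=
    tendsto_atTop_mono (fun n => Nat.le_mul_of_pos_left n hk2) tendsto_id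
  have hlim := ((tendsto_sum_Icc_sub_tsum_mul_pow_div hq hcC).comp hr).const_mul
    ((1 - 1 / q) * (q - 1))
  rw [show (1 - 1 / q) * (q - 1) * -(Real.log lam / (q - 1)) = -(1 - 1 / q) * Real.log lam by
    field_simp [(by linarith : q - 1 ≠ 0)]] at hlim
  refine hlim.congr fun n => ?_
  have hX : (p1 : ℝ) ^ (k1 * n) * (p2 : ℝ) ^ (k2 * n) ≠ 0 := by positivity
  exact (mul_sum_Icc_sub_mul_tsum_div_eq hX _ (k2 * n)).symm

/-- Surface entropy asymptotics of a 2-MIS on `ℕ²` with `Ω` a mixing SFT with primitive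
transition matrix `A`: for `x_n = p₁^{k₁n}`, `y_n = p₂^{k₂n}` with `k₁ ≥ k₂ ≥ 1`, the
normalized error of the pattern count converges to `-(1 - 1/(p₁p₂)) log λ_A`. -/
theorem stmt12 (m : ℕ) (hm : 1 ≤ m) (A : Matrix (Fin m) (Fin m) ℝ)
    (hA0 : ∀ i j, 0 ≤ A i j) (hAint : ∀ i j, ∃ z : ℕ, A i j = (z : ℝ))
    (hprim : ∃ N : ℕ, ∀ i j, 0 < (A ^ N) i j)
    (lam : ℝ) (l rv : Fin m → ℝ) (hl : ∀ i, 0 < l i) (hrv : ∀ i, 0 < rv i)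
    (hleft : Matrix.vecMul l A = lam • l) (hright : A.mulVec rv = lam • rv)
    (hnorm : ∑ i, l i * rv i = 1)
    (p1 p2 k1 k2 : ℕ) (hp1 : 2 ≤ p1) (hp2 : 2 ≤ p2) (hk : k2 ≤ k1) (hk2 : 1 ≤ k2)
    (c : ℕ → ℝ) (hc : ∀ i, 1 ≤ i → c i = Real.log (∑ k, ∑ j, (A ^ (i - 1)) k j))
    (h : ℝ)
    (hh : h = (1 - 1 / ((p1 : ℝ) * p2)) * ((p1 : ℝ) * p2 - 1) *
      ∑' i : ℕ, c (i + 1) / ((p1 : ℝ) * p2) ^ (i + 1)) :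
    Filter.Tendsto (fun n : ℕ =>
      ((1 - 1 / ((p1 : ℝ) * p2)) * ((p1 : ℝ) * p2 - 1) *
          (∑ i ∈ Finset.Icc 1 (k2 * n),
            ((p1 : ℝ) ^ (k1 * n) * (p2 : ℝ) ^ (k2 * n) / ((p1 : ℝ) * p2) ^ i) * c i)
        - (p1 : ℝ) ^ (k1 * n) * (p2 : ℝ) ^ (k2 * n) * h)
      / (((k2 * n : ℕ) : ℝ) * ((p1 : ℝ) ^ (k1 * n) * (p2 : ℝ) ^ (k2 * n))
          / ((p1 : ℝ) * p2) ^ (k2 * n)))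
      Filter.atTop (nhds (-(1 - 1 / ((p1 : ℝ) * p2)) * Real.log lam)) :=
  stmt12_general m hm A hA0 lam rv hrv hright p1 p2 k1 k2 hp1 hp2 hk2 c hc h hh
end

section
/- Let $p \geq 2$, $1 \leq k \leq p$, and $x_n = p^n - k$. For the full shift $\Omega$ with $|\Omega_i| = 2^i$, the surface-entropy error of the 2-multiplicative integer system $X^{(p,p)}_\Omega$ on $\mathbb{N}^2$ is linear in $n$: $\log|\mathcal{P}(\mathbb{Z}_{x_n, x_n}, X^{(p,p)}_\Omega)| - x_n^2 h = O(n)$, where $\log|\mathcal{P}(\mathbb{Z}_{x_n,x_n}, X^{(p,p)}_\Omega)| = \sum_{i=1}^{n-1} |\mathcal{K}_{x_n \times x_n; i}| \cdot i \log 2$ and $h = (1 - 1/p^2)^2 \sum_{i=1}^{\infty} \frac{p^2 \cdot i \log 2}{p^{2i}}$. -/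
open Classical in
/-- `K_{N×N;ℓ}`: pairs in `[1,N]²` with some coordinate not divisible by `p` whose geometric
orbit meets `[1,N]²` in exactly `ℓ` points. -/
noncomputable def Kset (p N ℓ : ℕ) : Finset (ℕ × ℕ) :=
  (Finset.Icc 1 N ×ˢ Finset.Icc 1 N).filter (fun q =>
    (¬ p ∣ q.1 ∨ ¬ p ∣ q.2) ∧
    ((Finset.Icc 1 N ×ˢ Finset.Icc 1 N).filter
      (fun z => ∃ m : ℕ, z.1 = q.1 * p ^ m ∧ z.2 = q.2 * p ^ m)).card = ℓ)

/-!
Every pair in `[1,N]²` is `(c pᵐ, d pᵐ)` for a unique primitive pair `(c, d)`, so the orbits of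
the primitive pairs partition the grid and `∑_ℓ |K_{N×N;ℓ}| ℓ = N²`. When `N < pⁿ` no orbit has
more than `n` points, and a primitive pair whose orbit has exactly `n` points satisfies
`c pⁿ⁻¹, d pⁿ⁻¹ ≤ N < pⁿ`, hence `c, d < p`. Thus the truncated sum over `ℓ ≤ n - 1` differs from
`N²` by at most `p² n`. Finally the series defining `h` sums to `log 2`.
-/

open Finset

section GridOrbit

open Classical

noncomputable def gridOrbit (p N : ℕ) (q : ℕ × ℕ) : Finset (ℕ × ℕ) :=
  (Icc 1 N ×ˢ Icc 1 N).filter (fun z => ∃ m : ℕ, z.1 = q.1 * p ^ m ∧ z.2 = q.2 * p ^ m)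

noncomputable def primitivePairs (p N : ℕ) : Finset (ℕ × ℕ) :=
  (Icc 1 N ×ˢ Icc 1 N).filter (fun q => ¬ p ∣ q.1 ∨ ¬ p ∣ q.2)

variable {p N : ℕ}

lemma Kset_eq_filter_primitivePairs (ℓ : ℕ) :
    Kset p N ℓ = (primitivePairs p N).filter (fun q => #(gridOrbit p N q) = ℓ) := by
  ext q
  rw [Kset, mem_filter, mem_filter, primitivePairs, mem_filter, and_assoc]
  rfl

lemma mem_primitivePairs {q : ℕ × ℕ} :
    q ∈ primitivePairs p N ↔
      ((1 ≤ q.1 ∧ q.1 ≤ N) ∧ 1 ≤ q.2 ∧ q.2 ≤ N) ∧ (¬ p ∣ q.1 ∨ ¬ p ∣ q.2) := by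
  simp only [primitivePairs, mem_filter, mem_product, mem_Icc]

lemma self_mem_gridOrbit {q : ℕ × ℕ} (hq : q ∈ Icc 1 N ×ˢ Icc 1 N) : q ∈ gridOrbit p N q := by
  simp only [gridOrbit, mem_filter]
  exact ⟨hq, 0, by simp, by simp⟩

lemma eq_of_mul_pow_eq_mul_pow (hp : 0 < p) {q q' : ℕ × ℕ} (hq : ¬ p ∣ q.1 ∨ ¬ p ∣ q.2)
    {m m' : ℕ} (hmm' : m ≤ m') (h₁ : q.1 * p ^ m = q'.1 * p ^ m')
    (h₂ : q.2 * p ^ m = q'.2 * p ^ m') : q = q' := by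
  obtain ⟨d, rfl⟩ := Nat.exists_eq_add_of_le hmm'
  have hpm : 0 < p ^ m := pow_pos hp m
  have e₁ : q.1 = q'.1 * p ^ d :=
    Nat.eq_of_mul_eq_mul_right hpm (by rw [h₁, pow_add]; ring)
  have e₂ : q.2 = q'.2 * p ^ d :=
    Nat.eq_of_mul_eq_mul_right hpm (by rw [h₂, pow_add]; ring)
  rcases Nat.eq_zero_or_pos d with rfl | hd
  · simp only [pow_zero, mul_one] at e₁ e₂
    exact Prod.ext e₁ e₂
  · have hdvd : p ∣ p ^ d := dvd_pow_self p hd.ne'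
    exact absurd ⟨e₁ ▸ hdvd.mul_left _, e₂ ▸ hdvd.mul_left _⟩ (not_and_or.mpr hq)

lemma disjoint_gridOrbit (hp : 0 < p) {q q' : ℕ × ℕ} (hq : ¬ p ∣ q.1 ∨ ¬ p ∣ q.2)
    (hq' : ¬ p ∣ q'.1 ∨ ¬ p ∣ q'.2) (hne : q ≠ q') :
    Disjoint (gridOrbit p N q) (gridOrbit p N q') := by
  rw [disjoint_left]
  intro z hz hz'
  obtain ⟨-, m, e₁, e₂⟩ := mem_filter.mp hz
  obtain ⟨-, m', f₁, f₂⟩ := mem_filter.mp hz'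
  rcases le_total m m' with hmm' | hm'm
  · exact hne (eq_of_mul_pow_eq_mul_pow hp hq hmm' (e₁.symm.trans f₁) (e₂.symm.trans f₂))
  · exact hne (eq_of_mul_pow_eq_mul_pow hp hq' hm'm (f₁.symm.trans e₁) (f₂.symm.trans e₂)).symm

lemma exists_primitive_mul_pow (hp : 2 ≤ p) {a b : ℕ} (ha : 0 < a) (hb : 0 < b) :
    ∃ c d m, (¬ p ∣ c ∨ ¬ p ∣ d) ∧ a = c * p ^ m ∧ b = d * p ^ m := by
  induction a using Nat.strong_induction_on generalizing b with
  | _ a ih =>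
    by_cases hdvd : p ∣ a ∧ p ∣ b
    · obtain ⟨⟨a', rfl⟩, ⟨b', rfl⟩⟩ := hdvd
      have ha' : 0 < a' := Nat.pos_of_mul_pos_left ha
      obtain ⟨c, d, m, hcd, rfl, rfl⟩ :=
        ih a' (lt_mul_left ha' (by omega)) ha' (Nat.pos_of_mul_pos_left hb)
      exact ⟨c, d, m + 1, hcd, by ring, by ring⟩
    · exact ⟨a, b, 0, not_and_or.mp hdvd, by simp, by simp⟩

lemma biUnion_primitivePairs_gridOrbit (hp : 2 ≤ p) :
    (primitivePairs p N).biUnion (gridOrbit p N) = Icc 1 N ×ˢ Icc 1 N := by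
  refine Subset.antisymm (biUnion_subset.mpr fun q _ => filter_subset _ _) fun z hz => ?_
  have hz' := hz
  simp only [mem_product, mem_Icc] at hz'
  obtain ⟨c, d, m, hcd, e₁, e₂⟩ := exists_primitive_mul_pow hp hz'.1.1 hz'.2.1
  have hpm : 0 < p ^ m := pow_pos (by omega) m
  have hc : 0 < c := Nat.pos_of_mul_pos_right (e₁ ▸ hz'.1.1)
  have hd : 0 < d := Nat.pos_of_mul_pos_right (e₂ ▸ hz'.2.1)
  have hcz : c ≤ z.1 := e₁ ▸ Nat.le_mul_of_pos_right c hpm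
  have hdz : d ≤ z.2 := e₂ ▸ Nat.le_mul_of_pos_right d hpm
  refine mem_biUnion.mpr ⟨(c, d), mem_primitivePairs.mpr ⟨?_, hcd⟩, mem_filter.mpr ⟨hz, m, e₁, e₂⟩⟩
  exact ⟨⟨hc, hcz.trans hz'.1.2⟩, hd, hdz.trans hz'.2.2⟩

lemma gridOrbit_eq_image {n : ℕ} (hp : 2 ≤ p) (hN : N < p ^ n) {q : ℕ × ℕ} (hq₁ : 0 < q.1)
    (hq₂ : 0 < q.2) :
    gridOrbit p N q = ((range n).filter (fun m => q.1 * p ^ m ≤ N ∧ q.2 * p ^ m ≤ N)).image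
      (fun m => (q.1 * p ^ m, q.2 * p ^ m)) := by
  ext z
  simp only [gridOrbit, mem_filter, mem_image, mem_product, mem_Icc, mem_range]
  have hpm : ∀ m, 0 < p ^ m := fun m => pow_pos (by omega) m
  constructor
  · rintro ⟨⟨⟨-, hz₁⟩, -, hz₂⟩, m, e₁, e₂⟩
    rw [e₁] at hz₁
    rw [e₂] at hz₂
    have hmn : m < n :=
      (Nat.pow_lt_pow_iff_right (by omega)).mp
        ((Nat.le_mul_of_pos_left _ hq₁).trans hz₁ |>.trans_lt hN)
    exact ⟨m, ⟨hmn, hz₁, hz₂⟩, Prod.ext e₁.symm e₂.symm⟩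
  · rintro ⟨m, ⟨-, h₁, h₂⟩, rfl⟩
    exact ⟨⟨⟨Nat.mul_pos hq₁ (hpm m), h₁⟩, Nat.mul_pos hq₂ (hpm m), h₂⟩, m, rfl, rfl⟩

lemma card_gridOrbit_eq {n : ℕ} (hp : 2 ≤ p) (hN : N < p ^ n) {q : ℕ × ℕ} (hq₁ : 0 < q.1)
    (hq₂ : 0 < q.2) :
    #(gridOrbit p N q) = #((range n).filter (fun m => q.1 * p ^ m ≤ N ∧ q.2 * p ^ m ≤ N)) := by
  rw [gridOrbit_eq_image hp hN hq₁ hq₂]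
  refine card_image_of_injOn fun a _ b _ hab => Nat.pow_right_injective hp ?_
  exact Nat.eq_of_mul_eq_mul_left hq₁ (congrArg Prod.fst hab)

lemma card_gridOrbit_mem_Icc {n : ℕ} (hp : 2 ≤ p) (hN : N < p ^ n) {q : ℕ × ℕ}
    (hq : q ∈ primitivePairs p N) : #(gridOrbit p N q) ∈ Icc 1 n := by
  obtain ⟨⟨⟨hq₁, hq₁N⟩, hq₂, hq₂N⟩, -⟩ := mem_primitivePairs.mp hq
  refine mem_Icc.mpr ⟨card_pos.mpr ⟨q, self_mem_gridOrbit ?_⟩, ?_⟩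
  · simp only [mem_product, mem_Icc]
    exact ⟨⟨hq₁, hq₁N⟩, hq₂, hq₂N⟩
  · rw [card_gridOrbit_eq hp hN hq₁ hq₂]
    exact (card_filter_le _ _).trans (card_range n).le

theorem sum_card_Kset_mul (hp : 2 ≤ p) {n : ℕ} (hN : N < p ^ n) :
    ∑ ℓ ∈ Icc 1 n, #(Kset p N ℓ) * ℓ = N * N := by
  have hdisj : (primitivePairs p N : Set (ℕ × ℕ)).PairwiseDisjoint (gridOrbit p N) :=
    fun q hq q' hq' hne => disjoint_gridOrbit (by omega) (mem_primitivePairs.mp hq).2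
      (mem_primitivePairs.mp hq').2 hne
  calc ∑ ℓ ∈ Icc 1 n, #(Kset p N ℓ) * ℓ
      = ∑ ℓ ∈ Icc 1 n, ∑ q ∈ (primitivePairs p N).filter (fun q => #(gridOrbit p N q) = ℓ),
          #(gridOrbit p N q) := by
        refine sum_congr rfl fun ℓ _ => ?_
        rw [Kset_eq_filter_primitivePairs, sum_congr rfl fun q hq => (mem_filter.mp hq).2,
          sum_const, smul_eq_mul]
    _ = ∑ q ∈ primitivePairs p N, #(gridOrbit p N q) :=
        sum_fiberwise_of_maps_to (fun q hq => card_gridOrbit_mem_Icc hp hN hq) _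
    _ = #((primitivePairs p N).biUnion (gridOrbit p N)) := (card_biUnion hdisj).symm
    _ = N * N := by rw [biUnion_primitivePairs_gridOrbit hp, card_product, Nat.card_Icc,
          Nat.add_sub_cancel]

lemma Kset_top_subset {n : ℕ} (hp : 2 ≤ p) (hn : 1 ≤ n) (hN : N < p ^ n) :
    Kset p N n ⊆ Icc 1 p ×ˢ Icc 1 p := by
  intro q hq
  rw [Kset_eq_filter_primitivePairs, mem_filter] at hq
  obtain ⟨hqP, hcard⟩ := hq
  obtain ⟨⟨⟨hq₁, -⟩, hq₂, -⟩, -⟩ := mem_primitivePairs.mp hqP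
  rw [card_gridOrbit_eq hp hN hq₁ hq₂] at hcard
  have hfull : (range n).filter (fun m => q.1 * p ^ m ≤ N ∧ q.2 * p ^ m ≤ N) = range n :=
    eq_of_subset_of_card_le (filter_subset _ _) (by rw [hcard, card_range])
  have hlast : n - 1 ∈ (range n).filter (fun m => q.1 * p ^ m ≤ N ∧ q.2 * p ^ m ≤ N) := by
    rw [hfull, mem_range]; omega
  obtain ⟨-, h₁, h₂⟩ := mem_filter.mp hlast
  have hpn : p ^ n = p * p ^ (n - 1) := by rw [← pow_succ']; congr 1; omega
  have hlt₁ : q.1 < p := Nat.lt_of_mul_lt_mul_right (h₁.trans_lt (hpn ▸ hN))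
  have hlt₂ : q.2 < p := Nat.lt_of_mul_lt_mul_right (h₂.trans_lt (hpn ▸ hN))
  simp only [mem_product, mem_Icc]
  omega

lemma card_Kset_top_le {n : ℕ} (hp : 2 ≤ p) (hn : 1 ≤ n) (hN : N < p ^ n) :
    #(Kset p N n) ≤ p * p := by
  simpa using card_le_card (Kset_top_subset hp hn hN)

end GridOrbit

lemma one_sub_inv_sq_mul_tsum {x : ℝ} (hx : 1 < x) (c : ℝ) :
    (1 - 1 / x) ^ 2 * ∑' i : ℕ, (x * ((i : ℝ) + 1) * c) / x ^ (i + 1) = c := by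
  have hx0 : x ≠ 0 := by positivity
  have hr : ‖1 / x‖ < 1 := by
    rw [Real.norm_eq_abs, abs_of_pos (by positivity)]
    exact (div_lt_one (by positivity)).mpr hx
  have hterm : ∀ i : ℕ, (x * ((i : ℝ) + 1) * c) / x ^ (i + 1)
      = c * (((i + 1).choose 1 : ℕ) * (1 / x) ^ i) := by
    intro i
    rw [Nat.choose_one_right, one_div_pow, pow_succ]
    field_simp
    push_cast
    ring
  rw [tsum_congr hterm, tsum_mul_left, tsum_choose_mul_geometric_of_norm_lt_one 1 hr]
  have h1x : 1 - 1 / x ≠ 0 := by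
    rw [one_sub_div hx0]
    exact div_ne_zero (sub_ne_zero.mpr hx.ne') hx0
  rw [one_add_one_eq_two, mul_one_div, mul_div_cancel₀ c (pow_ne_zero 2 h1x)]

theorem stmt15_general (p k : ℕ) (hp : 2 ≤ p) (hk1 : 1 ≤ k)
    (h : ℝ)
    (hh : h = (1 - 1 / (p : ℝ) ^ 2) ^ 2 *
      ∑' i : ℕ, ((p : ℝ) ^ 2 * ((i : ℝ) + 1) * Real.log 2) / (p : ℝ) ^ (2 * (i + 1))) :
    ∃ C : ℝ, 0 < C ∧ ∀ n : ℕ, 1 ≤ n →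
      |(∑ i ∈ Finset.Icc 1 (n - 1), ((Kset p (p ^ n - k) i).card : ℝ) * (i : ℝ) * Real.log 2)
        - ((p ^ n - k : ℕ) : ℝ) ^ 2 * h| ≤ C * n := by
  have hpR : (2 : ℝ) ≤ p := by exact_mod_cast hp
  have hlog : h = Real.log 2 := by
    simp only [hh, pow_mul]
    exact one_sub_inv_sq_mul_tsum (by nlinarith) _
  refine ⟨p * p * Real.log 2, by positivity, fun n hn => ?_⟩
  set N := p ^ n - k
  have hN : N < p ^ n := Nat.sub_lt (pow_pos (by omega) n) hk1
  obtain ⟨m, rfl⟩ : ∃ m, n = m + 1 := ⟨n - 1, by omega⟩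
  have hcount := sum_card_Kset_mul hp hN
  rw [sum_Icc_succ_top (by omega)] at hcount
  have hcountR : (∑ i ∈ Icc 1 m, (#(Kset p N i) : ℝ) * i) + #(Kset p N (m + 1)) * (m + 1)
      = (N : ℝ) ^ 2 := by exact_mod_cast (sq N).symm ▸ hcount
  have htop : (#(Kset p N (m + 1)) : ℝ) ≤ p * p := by
    exact_mod_cast card_Kset_top_le hp hn hN
  rw [hlog, Nat.add_sub_cancel, ← sum_mul, ← hcountR, add_mul, sub_add_cancel_left, abs_neg,
    abs_of_nonneg (by positivity)]
  push_cast
  rw [mul_right_comm _ (Real.log 2)]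
  gcongr

/-- For the full shift (`|Ω_i| = 2^i`) and `x_n = pⁿ - k`, the surface-entropy error is
linear in `n`: `log|𝒫(ℤ_{x_n,x_n})| - x_n² h = O(n)`. -/
theorem stmt15 (p k : ℕ) (hp : 2 ≤ p) (hk1 : 1 ≤ k) (hkp : k ≤ p)
    (h : ℝ)
    (hh : h = (1 - 1 / (p : ℝ) ^ 2) ^ 2 *
      ∑' i : ℕ, ((p : ℝ) ^ 2 * ((i : ℝ) + 1) * Real.log 2) / (p : ℝ) ^ (2 * (i + 1))) :
    ∃ C : ℝ, 0 < C ∧ ∀ n : ℕ, 1 ≤ n →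
      |(∑ i ∈ Finset.Icc 1 (n - 1), ((Kset p (p ^ n - k) i).card : ℝ) * (i : ℝ) * Real.log 2)
        - ((p ^ n - k : ℕ) : ℝ) ^ 2 * h| ≤ C * n :=
  stmt15_general p k hp hk1 h hh
end

section
/- Let $A$ be a primitive nonnegative integer matrix with spectral radius $\lambda_A$, and let $\Sigma_A$ be the associated one-dimensional SFT, so that the number of admissible words of length $n$ is $\|A^{n-1}\|_1$ (sum of all entries of $A^{n-1}$). Then $\log\|A^{n-1}\|_1 - n \log\lambda_A$ converges as $n \to \infty$ to $\log\left(\frac{\sum_k r_k \sum_j l_j}{\lambda_A}\right)$, where $l, r$ are left and right Perron eigenvectors of $A$ normalized so that $l \cdot r = 1$. -/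
/-!
With the right Perron vector `r`, the matrix `P i k = A i k * r k / (λ * r i)` (Doob's transform)
is row-stochastic with stationary distribution `π = l * r`, and `(A ^ n) i j / λ ^ n` equals
`r i * (P ^ n) i j / r j`. Since some power `P ^ N` has all entries at least `δ > 0`, Doeblin's
argument contracts the spread `max - min` of `P ^ n *ᵥ v` geometrically, while `π ⬝ᵥ (P ^ n *ᵥ v)`
stays equal to `π ⬝ᵥ v`; hence `(P ^ n) i j → π j` and `(A ^ n) i j / λ ^ n → r i * l j`.
Summing over `i, j` and taking logarithms gives the limit.
-/

open Filter Finset Topology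

lemma Finset.sum_mul_le_sum_mul_sup' {α : Type*} (s : Finset α) (hs : s.Nonempty) (p v : α → ℝ)
    (hp : ∀ k ∈ s, 0 ≤ p k) : ∑ k ∈ s, p k * v k ≤ (∑ k ∈ s, p k) * s.sup' hs v := by
  rw [sum_mul]
  exact sum_le_sum fun k hk => mul_le_mul_of_nonneg_left (le_sup' v hk) (hp k hk)

lemma Finset.sum_mul_inf'_le_sum_mul {α : Type*} (s : Finset α) (hs : s.Nonempty) (p v : α → ℝ)
    (hp : ∀ k ∈ s, 0 ≤ p k) : (∑ k ∈ s, p k) * s.inf' hs v ≤ ∑ k ∈ s, p k * v k := by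
  rw [sum_mul]
  exact sum_le_sum fun k hk => mul_le_mul_of_nonneg_left (inf'_le v hk) (hp k hk)

lemma tendsto_zero_of_antitone_of_le_mul {u : ℕ → ℝ} (hu : Antitone u) (hu0 : ∀ n, 0 ≤ u n)
    {θ : ℝ} (hθ : θ < 1) (N : ℕ) (hN : ∀ n, u (n + N) ≤ θ * u n) :
    Tendsto u atTop (𝓝 0) := by
  have hlim : Tendsto u atTop (𝓝 (⨅ n, u n)) :=
    tendsto_atTop_ciInf hu ⟨0, by rintro _ ⟨n, rfl⟩; exact hu0 n⟩
  have hle : ⨅ n, u n ≤ θ * ⨅ n, u n :=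
    le_of_tendsto_of_tendsto' (hlim.comp (tendsto_add_atTop_nat N)) (hlim.const_mul θ) hN
  have hnonneg : 0 ≤ ⨅ n, u n := le_ciInf hu0
  rwa [show ⨅ n, u n = 0 by nlinarith] at hlim

section Spread

variable {ι : Type*} [Fintype ι] [Nonempty ι]

noncomputable def vecSpread (v : ι → ℝ) : ℝ :=
  univ.sup' univ_nonempty v - univ.inf' univ_nonempty v

lemma vecSpread_nonneg (v : ι → ℝ) : 0 ≤ vecSpread v :=
  sub_nonneg.2 <| (inf'_le v (mem_univ (Classical.arbitrary ι))).trans (le_sup' v (mem_univ _))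

lemma abs_sub_le_vecSpread {v : ι → ℝ} {x : ℝ} (hlo : univ.inf' univ_nonempty v ≤ x)
    (hhi : x ≤ univ.sup' univ_nonempty v) (i : ι) : |v i - x| ≤ vecSpread v := by
  have := le_sup' v (mem_univ i)
  have := inf'_le v (mem_univ i)
  rw [vecSpread, abs_le]
  constructor <;> linarith

namespace Matrix

variable [DecidableEq ι] {P : Matrix ι ι ℝ}

lemma inf'_le_mulVec (hP : P ∈ rowStochastic ℝ ι) (v : ι → ℝ) (i : ι) :
    univ.inf' univ_nonempty v ≤ (P *ᵥ v) i := by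
  have h := sum_mul_inf'_le_sum_mul univ univ_nonempty (P i) v fun k _ => hP.1 i k
  rwa [sum_row_of_mem_rowStochastic hP, one_mul] at h

lemma mulVec_le_sup' (hP : P ∈ rowStochastic ℝ ι) (v : ι → ℝ) (i : ι) :
    (P *ᵥ v) i ≤ univ.sup' univ_nonempty v := by
  have h := sum_mul_le_sum_mul_sup' univ univ_nonempty (P i) v fun k _ => hP.1 i k
  rwa [sum_row_of_mem_rowStochastic hP, one_mul] at h

lemma vecSpread_mulVec_le (hP : P ∈ rowStochastic ℝ ι) (v : ι → ℝ) :
    vecSpread (P *ᵥ v) ≤ vecSpread v :=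
  sub_le_sub (sup'_le _ _ fun i _ => mulVec_le_sup' hP v i)
    (le_inf' _ _ fun i _ => inf'_le_mulVec hP v i)

/-- Doeblin's contraction: rows that share a common mass `δ` on every state average away
a fraction `card ι * δ` of the spread. -/
lemma vecSpread_mulVec_le_of_le_apply (hP : P ∈ rowStochastic ℝ ι) {δ : ℝ}
    (hδ : ∀ i k, δ ≤ P i k) (v : ι → ℝ) :
    vecSpread (P *ᵥ v) ≤ (1 - Fintype.card ι * δ) * vecSpread v := by
  have hsplit : ∀ i, (P *ᵥ v) i = ∑ k, (P i k - δ) * v k + δ * ∑ k, v k := fun i => by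
    simp only [mulVec, dotProduct, mul_sum, ← sum_add_distrib]
    exact sum_congr rfl fun k _ => by ring
  have hmass : ∀ i, ∑ k, (P i k - δ) = 1 - Fintype.card ι * δ := fun i => by
    simp [sum_sub_distrib, sum_row_of_mem_rowStochastic hP]
  obtain ⟨imax, -, hmax⟩ := exists_mem_eq_sup' univ_nonempty (P *ᵥ v)
  obtain ⟨imin, -, hmin⟩ := exists_mem_eq_inf' univ_nonempty (P *ᵥ v)
  have hup := sum_mul_le_sum_mul_sup' univ univ_nonempty (fun k => P imax k - δ) v
    fun k _ => sub_nonneg.2 (hδ imax k)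
  have hlo := sum_mul_inf'_le_sum_mul univ univ_nonempty (fun k => P imin k - δ) v
    fun k _ => sub_nonneg.2 (hδ imin k)
  rw [hmass] at hup hlo
  rw [vecSpread, vecSpread, hmax, hmin, hsplit, hsplit, mul_sub]
  linarith

lemma tendsto_vecSpread_pow_mulVec (hP : P ∈ rowStochastic ℝ ι)
    (hprim : ∃ N, ∀ i j, 0 < (P ^ N) i j) (v : ι → ℝ) :
    Tendsto (fun n => vecSpread ((P ^ n) *ᵥ v)) atTop (𝓝 0) := by
  obtain ⟨N, hN⟩ := hprim
  obtain ⟨⟨i₀, k₀⟩, hmin⟩ := Finite.exists_min fun p : ι × ι => (P ^ N) p.1 p.2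
  have hθ : 1 - Fintype.card ι * (P ^ N) i₀ k₀ < 1 :=
    sub_lt_self _ (mul_pos (Nat.cast_pos.2 Fintype.card_pos) (hN i₀ k₀))
  refine tendsto_zero_of_antitone_of_le_mul (antitone_nat_of_succ_le fun n => ?_)
    (fun n => vecSpread_nonneg _) hθ N fun n => ?_
  · rw [pow_succ', ← mulVec_mulVec]
    exact vecSpread_mulVec_le hP _
  · rw [add_comm, pow_add, ← mulVec_mulVec]
    exact vecSpread_mulVec_le_of_le_apply (pow_mem hP N) (fun i k => hmin (i, k)) _

lemma tendsto_pow_apply_of_vecMul_eq_self (hP : P ∈ rowStochastic ℝ ι)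
    (hprim : ∃ N, ∀ i j, 0 < (P ^ N) i j) {π : ι → ℝ} (hπ0 : ∀ i, 0 ≤ π i)
    (hπ1 : ∑ i, π i = 1) (hπ : π ᵥ* P = π) (i k : ι) :
    Tendsto (fun n => (P ^ n) i k) atTop (𝓝 (π k)) := by
  have hπpow : ∀ n, π ᵥ* P ^ n = π := fun n => by
    induction n with
    | zero => simp
    | succ n ih => rw [pow_succ, ← vecMul_vecMul, ih, hπ]
  set w : ℕ → ι → ℝ := fun n => P ^ n *ᵥ Pi.single k 1
  have hmean : ∀ n, ∑ j, π j * w n j = π k := fun n => by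
    change π ⬝ᵥ (P ^ n *ᵥ Pi.single k 1) = π k
    rw [dotProduct_mulVec, hπpow, dotProduct_single_one]
  have hclose : ∀ n, |(P ^ n) i k - π k| ≤ vecSpread (w n) := fun n => by
    have hlo := sum_mul_inf'_le_sum_mul univ univ_nonempty π (w n) fun j _ => hπ0 j
    have hup := sum_mul_le_sum_mul_sup' univ univ_nonempty π (w n) fun j _ => hπ0 j
    rw [hπ1, one_mul, hmean] at hlo hup
    simpa [w] using abs_sub_le_vecSpread hlo hup i
  refine tendsto_iff_norm_sub_tendsto_zero.2 (squeeze_zero (fun n => norm_nonneg _) hclose ?_)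
  exact tendsto_vecSpread_pow_mulVec hP hprim _

end Matrix

end Spread

namespace Matrix

variable {ι : Type*} [Fintype ι] {A : Matrix ι ι ℝ} {lam : ℝ} {r : ι → ℝ}

noncomputable def doobTransform (A : Matrix ι ι ℝ) (lam : ℝ) (r : ι → ℝ) : Matrix ι ι ℝ :=
  of fun i k => A i k * r k / (lam * r i)

lemma vecMul_doobTransform (hlam : lam ≠ 0) (hr : ∀ i, r i ≠ 0) {l : ι → ℝ}
    (hlA : l ᵥ* A = lam • l) : (l * r) ᵥ* doobTransform A lam r = l * r := by
  ext k
  have hcol : ∑ i, l i * A i k = lam * l k := congrFun hlA k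
  calc ∑ i, l i * r i * (A i k * r k / (lam * r i))
      = (∑ i, l i * A i k) * (r k / lam) := by
        rw [sum_mul]
        exact sum_congr rfl fun i _ => by field_simp [hr i]
    _ = l k * r k := by rw [hcol]; field_simp

lemma pos_of_mulVec_eq_smul (hA : ∀ i j, 0 ≤ A i j) (hr : ∀ i, 0 < r i)
    (hAr : A *ᵥ r = lam • r) (hA0 : A ≠ 0) : 0 < lam := by
  by_contra! hlam
  refine hA0 (ext fun i k => ?_)
  have hrow : ∑ k, A i k * r k = lam * r i := congrFun hAr i
  have hterms := (sum_eq_zero_iff_of_nonneg fun k _ => mul_nonneg (hA i k) (hr k).le).1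
    (le_antisymm (hrow.trans_le (mul_nonpos_of_nonpos_of_nonneg hlam (hr i).le))
      (sum_nonneg fun k _ => mul_nonneg (hA i k) (hr k).le)) k (mem_univ k)
  simpa [(hr k).ne'] using hterms

variable [DecidableEq ι]

lemma doobTransform_pow_apply (hlam : lam ≠ 0) (hr : ∀ i, r i ≠ 0) (n : ℕ) (i k : ι) :
    (doobTransform A lam r ^ n) i k = (A ^ n) i k * r k / (lam ^ n * r i) := by
  induction n generalizing k with
  | zero => by_cases h : i = k <;> simp [h, hr]
  | succ n ih =>
    rw [pow_succ, mul_apply, pow_succ, mul_apply, sum_mul, sum_div]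
    refine sum_congr rfl fun j _ => ?_
    rw [ih, doobTransform, of_apply]
    field_simp [hr j]
    ring

lemma doobTransform_mem_rowStochastic (hA : ∀ i j, 0 ≤ A i j) (hlam : 0 < lam)
    (hr : ∀ i, 0 < r i) (hAr : A *ᵥ r = lam • r) : doobTransform A lam r ∈ rowStochastic ℝ ι := by
  refine mem_rowStochastic_iff_sum.2 ⟨fun i k => ?_, fun i => ?_⟩
  · exact div_nonneg (mul_nonneg (hA i k) (hr k).le) (mul_pos hlam (hr i)).le
  · have hrow : ∑ k, A i k * r k = lam * r i := congrFun hAr i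
    simp only [doobTransform, of_apply, ← sum_div, hrow]
    exact div_self (mul_pos hlam (hr i)).ne'

theorem tendsto_pow_apply_div_pow_of_perron (hA : ∀ i j, 0 ≤ A i j)
    (hprim : ∃ N, ∀ i j, 0 < (A ^ N) i j) (hlam : 0 < lam) {l : ι → ℝ} (hl : ∀ i, 0 < l i)
    (hr : ∀ i, 0 < r i) (hlA : l ᵥ* A = lam • l) (hAr : A *ᵥ r = lam • r)
    (hlr : ∑ i, l i * r i = 1) (i j : ι) :
    Tendsto (fun n => (A ^ n) i j / lam ^ n) atTop (𝓝 (r i * l j)) := by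
  have : Nonempty ι := ⟨i⟩
  have hr0 : ∀ i, r i ≠ 0 := fun i => (hr i).ne'
  have hPpow := doobTransform_pow_apply (A := A) hlam.ne' hr0
  have hPprim : ∃ N, ∀ i j, 0 < (doobTransform A lam r ^ N) i j := by
    obtain ⟨N, hN⟩ := hprim
    refine ⟨N, fun i k => ?_⟩
    rw [hPpow]
    exact div_pos (mul_pos (hN i k) (hr k)) (mul_pos (pow_pos hlam N) (hr i))
  have hlim := (tendsto_pow_apply_of_vecMul_eq_self
    (doobTransform_mem_rowStochastic hA hlam hr hAr) hPprim (π := l * r)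
    (fun i => (mul_pos (hl i) (hr i)).le) hlr (vecMul_doobTransform hlam.ne' hr0 hlA)
    i j).const_mul (r i / r j)
  convert hlim using 2 with n
  · rw [hPpow]
    field_simp [hr0 i, hr0 j, pow_ne_zero n hlam.ne']
  · simp only [Pi.mul_apply]
    field_simp [hr0 j]

end Matrix

lemma tendsto_log_sub_mul_log_of_tendsto_div_pow {u : ℕ → ℝ} {c T : ℝ} (hc : 0 < c) (hT : 0 < T)
    (hu : Tendsto (fun n => u n / c ^ n) atTop (𝓝 T)) :
    Tendsto (fun n : ℕ => Real.log (u (n - 1)) - n * Real.log c) atTop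
      (𝓝 (Real.log (T / c))) := by
  have hlog := ((Real.continuousAt_log hT.ne').tendsto.comp hu).sub_const (Real.log c)
  rw [← Real.log_div hT.ne' hc.ne'] at hlog
  refine (hlog.comp (tendsto_sub_atTop_nat 1)).congr' ?_
  filter_upwards [eventually_ge_atTop 1,
    (tendsto_sub_atTop_nat 1).eventually (hu.eventually_ne hT.ne')] with n hn hne
  have hu0 : u (n - 1) ≠ 0 := fun h => hne (by simp [h])
  simp only [Function.comp, Real.log_div hu0 (pow_ne_zero _ hc.ne'), Real.log_pow,
    Nat.cast_sub hn]
  ring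

theorem stmt18_general (m : ℕ) (A : Matrix (Fin m) (Fin m) ℝ)
    (hA0 : ∀ i j, 0 ≤ A i j)
    (hprim : ∃ N : ℕ, ∀ i j, 0 < (A ^ N) i j)
    (lam : ℝ) (l rv : Fin m → ℝ) (hl : ∀ i, 0 < l i) (hrv : ∀ i, 0 < rv i)
    (hleft : Matrix.vecMul l A = lam • l) (hright : A.mulVec rv = lam • rv)
    (hnorm : ∑ i, l i * rv i = 1) :
    Filter.Tendsto (fun n : ℕ =>
      Real.log (∑ i, ∑ j, (A ^ (n - 1)) i j) - (n : ℝ) * Real.log lam)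
      Filter.atTop (nhds (Real.log ((∑ i, rv i) * (∑ j, l j) / lam))) := by
  obtain ⟨i₀, -⟩ := nonempty_of_sum_ne_zero (hnorm.trans_ne one_ne_zero)
  by_cases hA : A = 0
  -- possible only for `m = 1` and `N = 0`; then `λ = 0` and both sides vanish since `log 0 = 0`
  · have hlam : lam = 0 := by
      have := congrFun hright i₀
      simp only [hA, Matrix.zero_mulVec, Pi.zero_apply, Pi.smul_apply, smul_eq_mul] at this
      exact (mul_eq_zero.1 this.symm).resolve_right (hrv i₀).ne'
    subst hA hlam
    refine tendsto_const_nhds.congr' ?_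
    filter_upwards [eventually_ge_atTop 2] with n hn
    simp [zero_pow (by omega : n - 1 ≠ 0)]
  have hlam := Matrix.pos_of_mulVec_eq_smul hA0 hrv hright hA
  have hT : 0 < (∑ i, rv i) * ∑ j, l j :=
    mul_pos (sum_pos (fun i _ => hrv i) ⟨i₀, mem_univ _⟩)
      (sum_pos (fun j _ => hl j) ⟨i₀, mem_univ _⟩)
  refine tendsto_log_sub_mul_log_of_tendsto_div_pow (u := fun n => ∑ i, ∑ j, (A ^ n) i j)
    hlam hT ?_
  simp only [sum_div, sum_mul_sum]
  exact tendsto_finsetSum _ fun i _ => tendsto_finsetSum _ fun j _ =>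
    Matrix.tendsto_pow_apply_div_pow_of_perron hA0 hprim hlam hl hrv hleft hright hnorm i j

/-- Surface entropy formula for 1-dimensional mixing SFTs: for a primitive nonnegative
integer matrix `A` with Perron data `(λ, l, r)`, `log‖A^{n-1}‖₁ - n log λ` converges to
`log((Σ_k r_k)(Σ_j l_j)/λ)`. -/
theorem stmt18 (m : ℕ) (hm : 1 ≤ m) (A : Matrix (Fin m) (Fin m) ℝ)
    (hA0 : ∀ i j, 0 ≤ A i j) (hAint : ∀ i j, ∃ z : ℕ, A i j = (z : ℝ))
    (hprim : ∃ N : ℕ, ∀ i j, 0 < (A ^ N) i j)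
    (lam : ℝ) (l rv : Fin m → ℝ) (hl : ∀ i, 0 < l i) (hrv : ∀ i, 0 < rv i)
    (hleft : Matrix.vecMul l A = lam • l) (hright : A.mulVec rv = lam • rv)
    (hnorm : ∑ i, l i * rv i = 1) :
    Filter.Tendsto (fun n : ℕ =>
      Real.log (∑ i, ∑ j, (A ^ (n - 1)) i j) - (n : ℝ) * Real.log lam)
      Filter.atTop (nhds (Real.log ((∑ i, rv i) * (∑ j, l j) / lam))) :=
  stmt18_general m A hA0 hprim lam l rv hl hrv hleft hright hnorm
end
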